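/- arXiv:2410.09559 — 7 statements merged into one kernel-verified Lean document; each statement's English description precedes it below -/
import Mathlib

section
/- Let H be a real Hilbert space, and let M1 and M2 be closed subspaces of H with orthogonal projections P1 onto M1 and P2 onto M2. Let P_I be the orthogonal projection onto the intersection M1 ⊓ M2. Then for every h ∈ H, the iterates (P2 ∘ P1)^k h converge in norm to P_I h as k → ∞. -/
/-!
Let `T = P₁P₂P₁`. It is symmetric and `‖T y‖² ≤ ⟪T y, y⟫ ≤ ‖y‖²`, so `t k = ⟪T^k h, h⟫` is
nonnegative and decreasing, as `t (2n) = ‖T^n h‖²` and `t (2n+1) = ⟪T (T^n h), T^n h⟫`. The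
identity `‖T^m h - T^n h‖² = t (2m) - 2 t (m+n) + t (2n)` then makes `T^k h` a Cauchy sequence.
Its limit is a fixed point of `T`, hence lies in `M₁ ⊓ M₂`, and `h` minus the limit is orthogonal
to every fixed point `w` of `T` because `⟪T^k h, w⟫ = ⟪h, T^k w⟫ = ⟪h, w⟫`; so the limit is
`P_I h`. Finally `(P₂P₁)^(k+1) = P₂P₁ T^k`.
-/

open RealInnerProductSpace Filter Topology

section PositiveContraction

variable {E : Type*} [NormedAddCommGroup E] [InnerProductSpace ℝ E] {T : E →ₗ[ℝ] E}

theorem real_inner_apply_self_le_norm_sq (hT2 : ∀ y, ‖T y‖ ^ 2 ≤ ⟪T y, y⟫) (y : E) :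
    ⟪T y, y⟫ ≤ ‖y‖ ^ 2 := by
  have hCS : ⟪T y, y⟫ ≤ ‖T y‖ * ‖y‖ := real_inner_le_norm _ _
  have hTy : ‖T y‖ ≤ ‖y‖ := by nlinarith [hT2 y, norm_nonneg (T y), norm_nonneg y]
  nlinarith [norm_nonneg (T y), norm_nonneg y]

namespace LinearMap.IsSymmetric

variable (hT : T.IsSymmetric)
include hT

theorem inner_iterate_left (n : ℕ) (x y : E) : ⟪T^[n] x, y⟫ = ⟪x, T^[n] y⟫ := by
  simpa only [Module.End.coe_pow] using hT.pow n x y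

theorem inner_iterate_add_apply_self (m n : ℕ) (x : E) :
    ⟪T^[m + n] x, x⟫ = ⟪T^[m] x, T^[n] x⟫ := by
  rw [Function.iterate_add_apply, hT.inner_iterate_left, real_inner_comm]

theorem inner_sub_eq_zero_of_tendsto_iterate {x y w : E}
    (hxy : Tendsto (fun n => T^[n] x) atTop (𝓝 y)) (hw : T w = w) : ⟪x - y, w⟫ = 0 := by
  have hconst : (fun n => ⟪T^[n] x, w⟫) = fun _ => ⟪x, w⟫ := by
    ext n
    rw [hT.inner_iterate_left, Function.iterate_fixed hw]
  have hlim : Tendsto (fun n => ⟪T^[n] x, w⟫) atTop (𝓝 ⟪y, w⟫) := hxy.inner tendsto_const_nhds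
  rw [hconst] at hlim
  rw [inner_sub_left, tendsto_nhds_unique tendsto_const_nhds hlim, sub_self]

variable (hT2 : ∀ y, ‖T y‖ ^ 2 ≤ ⟪T y, y⟫)
include hT2

theorem antitone_inner_iterate_apply_self (x : E) : Antitone fun k => ⟪T^[k] x, x⟫ := by
  refine antitone_nat_of_succ_le fun k => ?_
  obtain ⟨n, rfl | rfl⟩ := Nat.even_or_odd' k
  · rw [two_mul, show n + n + 1 = (n + 1) + n by ring, hT.inner_iterate_add_apply_self,
      hT.inner_iterate_add_apply_self, Function.iterate_succ_apply', real_inner_self_eq_norm_sq]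
    exact real_inner_apply_self_le_norm_sq hT2 _
  · rw [two_mul, show n + n + 1 + 1 = (n + 1) + (n + 1) by ring,
      show n + n + 1 = (n + 1) + n by ring, hT.inner_iterate_add_apply_self,
      hT.inner_iterate_add_apply_self, real_inner_self_eq_norm_sq,
      Function.iterate_succ_apply']
    exact hT2 _

theorem inner_iterate_apply_self_nonneg (x : E) (k : ℕ) : 0 ≤ ⟪T^[k] x, x⟫ := by
  obtain ⟨n, rfl | rfl⟩ := Nat.even_or_odd' k
  · rw [two_mul, hT.inner_iterate_add_apply_self, real_inner_self_eq_norm_sq]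
    positivity
  · rw [two_mul, show n + n + 1 = (n + 1) + n by ring, hT.inner_iterate_add_apply_self,
      Function.iterate_succ_apply']
    exact (sq_nonneg _).trans (hT2 _)

theorem cauchySeq_iterate_apply (x : E) : CauchySeq fun n => T^[n] x := by
  set t : ℕ → ℝ := fun k => ⟪T^[k] x, x⟫
  obtain ⟨L, hL⟩ : ∃ L, Tendsto t atTop (𝓝 L) :=
    ⟨_, tendsto_atTop_ciInf (hT.antitone_inner_iterate_apply_self hT2 x)
      ⟨0, by rintro _ ⟨k, rfl⟩; exact hT.inner_iterate_apply_self_nonneg hT2 x k⟩⟩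
  have hdist : ∀ m n,
      dist (T^[m] x) (T^[n] x) ^ 2 = t (m + m) - 2 * t (m + n) + t (n + n) := by
    intro m n
    simp only [t, hT.inner_iterate_add_apply_self, dist_eq_norm, ← real_inner_self_eq_norm_sq,
      inner_sub_sub_self, real_inner_comm (T^[m] x)]
    ring
  have hlim : ∀ f : ℕ × ℕ → ℕ, (∀ p, min p.1 p.2 ≤ f p) → Tendsto (t ∘ f) atTop (𝓝 L) := by
    refine fun f hf => hL.comp (tendsto_atTop_mono hf ?_)
    exact tendsto_atTop_atTop.2 fun b => ⟨(b, b), fun p hp => le_min hp.1 hp.2⟩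
  have hsq : Tendsto (fun p : ℕ × ℕ => dist (T^[p.1] x) (T^[p.2] x) ^ 2) atTop (𝓝 0) := by
    have hL0 : L - 2 * L + L = 0 := by ring
    simpa only [hdist, hL0, Function.comp_def] using
      ((hlim (fun p => p.1 + p.1) (by omega)).sub
        ((hlim (fun p => p.1 + p.2) (by omega)).const_mul 2)).add
        (hlim (fun p => p.2 + p.2) (by omega))
  rw [cauchySeq_iff_tendsto_dist_atTop_0]
  simpa [Real.sqrt_sq dist_nonneg] using hsq.sqrt

end LinearMap.IsSymmetric

end PositiveContraction

namespace Submodule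

variable {H : Type*} [NormedAddCommGroup H] [InnerProductSpace ℝ H]
  (K L : Submodule ℝ H) [K.HasOrthogonalProjection] [L.HasOrthogonalProjection]

theorem isSymmetric_starProjection_comp_comp :
    ((K.starProjection ∘L L.starProjection ∘L K.starProjection : H →L[ℝ] H) :
      H →ₗ[ℝ] H).IsSymmetric := fun u v => by
  simp only [ContinuousLinearMap.coe_coe, ContinuousLinearMap.comp_apply,
    inner_starProjection_left_eq_right]

theorem real_inner_starProjection_apply_self (z : H) :
    ⟪K.starProjection z, z⟫ = ‖K.starProjection z‖ ^ 2 := by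
  simpa using K.re_inner_starProjection_eq_normSq z

theorem norm_sq_starProjection_comp_comp_apply_le (y : H) :
    ‖(K.starProjection ∘L L.starProjection ∘L K.starProjection) y‖ ^ 2 ≤
      ⟪(K.starProjection ∘L L.starProjection ∘L K.starProjection) y, y⟫ := by
  simp only [ContinuousLinearMap.comp_apply]
  calc ‖K.starProjection (L.starProjection (K.starProjection y))‖ ^ 2
      ≤ ‖L.starProjection (K.starProjection y)‖ ^ 2 := by
        gcongr
        exact K.norm_starProjection_apply_le _
    _ = ⟪L.starProjection (K.starProjection y), K.starProjection y⟫ :=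
        (L.real_inner_starProjection_apply_self _).symm
    _ = ⟪K.starProjection (L.starProjection (K.starProjection y)), y⟫ :=
        (K.inner_starProjection_left_eq_right _ _).symm

theorem mem_inf_of_starProjection_comp_comp_apply_eq_self {y : H}
    (hy : (K.starProjection ∘L L.starProjection ∘L K.starProjection) y = y) : y ∈ K ⊓ L := by
  have hyK : y ∈ K := hy ▸ K.starProjection_apply_mem _
  rw [ContinuousLinearMap.comp_apply, ContinuousLinearMap.comp_apply,
    starProjection_eq_self_iff.2 hyK] at hy
  refine ⟨hyK, (L.mem_iff_norm_starProjection y).2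
    (le_antisymm (L.norm_starProjection_apply_le y) ?_)⟩
  calc ‖y‖ = ‖K.starProjection (L.starProjection y)‖ := by rw [hy]
    _ ≤ ‖L.starProjection y‖ := K.norm_starProjection_apply_le _

theorem starProjection_comp_comp_apply_of_mem_inf {w : H} (hw : w ∈ K ⊓ L) :
    (K.starProjection ∘L L.starProjection ∘L K.starProjection) w = w := by
  simp only [ContinuousLinearMap.comp_apply, starProjection_eq_self_iff.2 hw.1,
    starProjection_eq_self_iff.2 hw.2]

theorem semiconj_starProjection_comp :
    Function.Semiconj (L.starProjection ∘L K.starProjection)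
      (K.starProjection ∘L L.starProjection ∘L K.starProjection)
      (L.starProjection ∘L K.starProjection) := fun x => by
  simp only [ContinuousLinearMap.comp_apply,
    starProjection_eq_self_iff.2 (K.starProjection_apply_mem _)]

end Submodule

theorem alternating_projection_general
    {H : Type*} [NormedAddCommGroup H] [InnerProductSpace ℝ H] [CompleteSpace H]
    (M1 M2 : Submodule ℝ H)
    [CompleteSpace M1] [CompleteSpace M2] [CompleteSpace (M1 ⊓ M2 : Submodule ℝ H)]
    (h : H) :
    Filter.Tendsto
      (fun k : ℕ =>
        (fun x : H => (Submodule.orthogonalProjection M2 ((Submodule.orthogonalProjection M1 x : H)) : H))^[k] h)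
      Filter.atTop
      (nhds ((Submodule.orthogonalProjection (M1 ⊓ M2) h : H))) := by
  set S := M2.starProjection ∘L M1.starProjection
  set T := M1.starProjection ∘L M2.starProjection ∘L M1.starProjection
  have hT := M1.isSymmetric_starProjection_comp_comp M2
  obtain ⟨y, hy⟩ := cauchySeq_tendsto_of_complete
    (hT.cauchySeq_iterate_apply (M1.norm_sq_starProjection_comp_comp_apply_le M2) h)
  simp only [ContinuousLinearMap.coe_coe] at hy
  have hyI : y ∈ M1 ⊓ M2 := M1.mem_inf_of_starProjection_comp_comp_apply_eq_self M2
    (isFixedPt_of_tendsto_iterate hy T.continuous.continuousAt)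
  have hPI : (M1 ⊓ M2).starProjection h = y :=
    Submodule.eq_starProjection_of_mem_of_inner_eq_zero hyI fun w hw =>
      hT.inner_sub_eq_zero_of_tendsto_iterate hy
        (M1.starProjection_comp_comp_apply_of_mem_inf M2 hw)
  have hSy : S y = y := by
    simp only [S, ContinuousLinearMap.comp_apply, Submodule.starProjection_eq_self_iff.2 hyI.1,
      Submodule.starProjection_eq_self_iff.2 hyI.2]
  have hiter : ∀ k, S^[k + 1] h = S (T^[k] h) := fun k => by
    rw [Function.iterate_succ_apply, ← (M1.semiconj_starProjection_comp M2).iterate_right k h]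
  change Tendsto (fun k => S^[k] h) atTop (𝓝 ((M1 ⊓ M2).starProjection h))
  rw [hPI, ← tendsto_add_atTop_iff_nat 1, funext hiter]
  exact hSy ▸ (S.continuous.tendsto y).comp hy

/-- **Von Neumann's alternating projection theorem.**
Let `H` be a real Hilbert space and `M1`, `M2` closed subspaces of `H`, with
orthogonal projections `P1` onto `M1`, `P2` onto `M2`, and `P_I` onto the
intersection `M1 ⊓ M2`.  Then for every `h ∈ H`, the iterates `(P2 ∘ P1)^[k] h`
converge in norm to `P_I h` as `k → ∞`. -/
theorem alternating_projection
    {H : Type*} [NormedAddCommGroup H] [InnerProductSpace ℝ H] [CompleteSpace H]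
    (M1 M2 : Submodule ℝ H)
    (hM1 : IsClosed (M1 : Set H)) (hM2 : IsClosed (M2 : Set H))
    [CompleteSpace M1] [CompleteSpace M2] [CompleteSpace (M1 ⊓ M2 : Submodule ℝ H)]
    (h : H) :
    Filter.Tendsto
      (fun k : ℕ =>
        (fun x : H => (Submodule.orthogonalProjection M2 ((Submodule.orthogonalProjection M1 x : H)) : H))^[k] h)
      Filter.atTop
      (nhds ((Submodule.orthogonalProjection (M1 ⊓ M2) h : H))) :=
  alternating_projection_general M1 M2 h
end

section
/- Let D be a finite index type and S : D → Type a family of nonempty finite types. Let c ⊆ D be a finite set of indices, b ⊆ c, u = c \ b, and let a ⊆ D be disjoint from b. Let f be a conditional pmf of the a-coordinates given the b-coordinates, and let h and g be positive pmfs on ∏_{j∈c} S j with b-marginals h_b and g_b. Define the conditional replacement operator T by T(h)(x_a, x_b) = f(x_a | x_b) · h_b(x_b), a pmf on ∏_{j∈a∪b} S j. Then I(h; g) − I(T(h); T(g)) = ∑_{x_b} h_b(x_b) · I(h_{u|b}(·|x_b); g_{u|b}(·|x_b)) ≥ 0, where h_{u|b}(x_u|x_b) = h(x_u, x_b)/h_b(x_b).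 In particular I(T(h); T(g)) ≤ I(h; g), with equality if and only if h_{u|b} = g_{u|b} everywhere. -/
noncomputable section

variable {D : Type*}

/-- Configurations of the coordinates indexed by a finite set `c ⊆ D`. -/
abbrev Cfg (S : D → Type*) (c : Finset D) : Type _ := ∀ j : c, S j

/-- Kullback–Leibler divergence, with the convention `0 * log 0 = 0`. -/
def KLd {Z : Type*} [Fintype Z] (p q : Z → ℝ) : ℝ :=
  ∑ z, p z * Real.log (p z / q z)

/-- The `b`-marginal of a function `h` on the `c`-coordinates, for `b ⊆ c`. -/
def marg (S : D → Type*) [DecidableEq D] [∀ j, Fintype (S j)] [∀ j, DecidableEq (S j)]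
    {b c : Finset D} (hbc : b ⊆ c) (h : Cfg S c → ℝ) : Cfg S b → ℝ :=
  fun xb => ∑ x : Cfg S c, if (fun j : b => x ⟨j.1, hbc j.2⟩) = xb then h x else 0

/-- The conditional replacement operator `T (h) = f (x_a | x_b) * h_b (x_b)`. -/
def condRepl (S : D → Type*) [DecidableEq D] [∀ j, Fintype (S j)] [∀ j, DecidableEq (S j)]
    {a b c : Finset D} (hbc : b ⊆ c) (f : Cfg S a → Cfg S b → ℝ) (h : Cfg S c → ℝ) :
    Cfg S (a ∪ b) → ℝ :=
  fun x => f (fun j : a => x ⟨j.1, Finset.mem_union_left b j.2⟩)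
             (fun j : b => x ⟨j.1, Finset.mem_union_right a j.2⟩) *
           marg S hbc h (fun j : b => x ⟨j.1, Finset.mem_union_right a j.2⟩)

/-- Combine a configuration on `c \ b` with one on `b ⊆ c` into one on `c`. -/
def glue (S : D → Type*) [DecidableEq D] {b c : Finset D} (hbc : b ⊆ c)
    (xu : Cfg S (c \ b)) (xb : Cfg S b) : Cfg S c :=
  fun j => if hj : j.1 ∈ b then xb ⟨j.1, hj⟩
           else xu ⟨j.1, Finset.mem_sdiff.mpr ⟨j.2, hj⟩⟩

/-!
Gluing `x_{c∖b}` to `x_b` turns `h` and `g` into joint pmfs of `(x_u, x_b)`, and the chain rule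
splits `I(h; g)` into `I(h_b; g_b)` plus the conditional divergence
`∑_{x_b} h_b(x_b) I(h_{u|b}(·|x_b); g_{u|b}(·|x_b))`. The images `T h` and `T g` share the factor
`f(x_a | x_b)`, which cancels in the log-ratio and then sums out, so `I(T h; T g) = I(h_b; g_b)`.
The drop is therefore the conditional divergence, which is nonnegative, and zero exactly when the
conditionals agree, by Gibbs' inequality.
-/

open Real InformationTheory

section KLd

variable {α β : Type*} [Fintype α]

lemma KLd_eq_sum_mul_klFun {p q : α → ℝ} (hq : ∀ x, 0 < q x)
    (hsum : ∑ x, p x = ∑ x, q x) : KLd p q = ∑ x, q x * klFun (p x / q x) := by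
  have hterm : ∀ x, q x * klFun (p x / q x) = p x * log (p x / q x) + (q x - p x) := by
    intro x
    have hqx := (hq x).ne'
    rw [klFun_apply]
    field_simp
    ring
  simp_rw [hterm, Finset.sum_add_distrib, Finset.sum_sub_distrib, hsum, sub_self, add_zero, KLd]

lemma KLd_nonneg {p q : α → ℝ} (hp : ∀ x, 0 ≤ p x) (hq : ∀ x, 0 < q x)
    (hsum : ∑ x, p x = ∑ x, q x) : 0 ≤ KLd p q := by
  rw [KLd_eq_sum_mul_klFun hq hsum]
  exact Finset.sum_nonneg fun x _ =>
    mul_nonneg (hq x).le (klFun_nonneg (div_nonneg (hp x) (hq x).le))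

lemma KLd_eq_zero_iff {p q : α → ℝ} (hp : ∀ x, 0 ≤ p x) (hq : ∀ x, 0 < q x)
    (hsum : ∑ x, p x = ∑ x, q x) : KLd p q = 0 ↔ ∀ x, p x = q x := by
  have hklFun_nonneg : ∀ x, 0 ≤ klFun (p x / q x) := fun x =>
    klFun_nonneg (div_nonneg (hp x) (hq x).le)
  rw [KLd_eq_sum_mul_klFun hq hsum,
    Finset.sum_eq_zero_iff_of_nonneg fun x _ => mul_nonneg (hq x).le (hklFun_nonneg x)]
  refine forall_congr' fun x => ?_
  rw [mul_eq_zero, or_iff_right (hq x).ne', klFun_eq_zero_iff (div_nonneg (hp x) (hq x).le),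
    div_eq_one_iff_eq (hq x).ne']
  simp

lemma marginal_pos [Nonempty α] {p : α × β → ℝ} {pβ : β → ℝ}
    (hp : ∀ z, 0 < p z) (hpβ : ∀ y, pβ y = ∑ x, p (x, y)) (y : β) : 0 < pβ y := by
  rw [hpβ]
  exact Finset.sum_pos (fun x _ => hp (x, y)) Finset.univ_nonempty

lemma sum_div_marginal_eq_one [Nonempty α] {p : α × β → ℝ} {pβ : β → ℝ}
    (hp : ∀ z, 0 < p z) (hpβ : ∀ y, pβ y = ∑ x, p (x, y)) (y : β) :
    ∑ x, p (x, y) / pβ y = 1 := by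
  rw [← Finset.sum_div, ← hpβ, div_self (marginal_pos hp hpβ y).ne']

variable [Fintype β]

lemma KLd_comp_equiv (e : α ≃ β) (p q : β → ℝ) : KLd (p ∘ e) (q ∘ e) = KLd p q :=
  e.sum_comp fun z => p z * log (p z / q z)

/-- The marginals `pβ`, `qβ` are parameters, so that `marg` can be supplied as it stands. -/
def condKLd (p q : α × β → ℝ) (pβ qβ : β → ℝ) : ℝ :=
  ∑ y, pβ y * KLd (fun x => p (x, y) / pβ y) (fun x => q (x, y) / qβ y)

lemma KLd_cond_mul_marginal (f : α → β → ℝ) (hf : ∀ y, ∑ x, f x y = 1) (m m' : β → ℝ) :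
    KLd (fun z : α × β => f z.1 z.2 * m z.2) (fun z => f z.1 z.2 * m' z.2) = KLd m m' := by
  rw [KLd, Fintype.sum_prod_type_right]
  refine Finset.sum_congr rfl fun y _ => ?_
  have hterm : ∀ x, f x y * m y * log (f x y * m y / (f x y * m' y)) =
      f x y * (m y * log (m y / m' y)) := by
    intro x
    rcases eq_or_ne (f x y) 0 with h0 | h0
    · simp [h0]
    · rw [mul_div_mul_left _ _ h0, mul_assoc]
  simp_rw [hterm, ← Finset.sum_mul, hf, one_mul]

section Marginal

variable [Nonempty α] {p q : α × β → ℝ} {pβ qβ : β → ℝ}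

lemma KLd_eq_KLd_marginal_add_condKLd (hp : ∀ z, 0 < p z) (hq : ∀ z, 0 < q z)
    (hpβ : ∀ y, pβ y = ∑ x, p (x, y)) (hqβ : ∀ y, qβ y = ∑ x, q (x, y)) :
    KLd p q = KLd pβ qβ + condKLd p q pβ qβ := by
  rw [KLd, KLd, condKLd, Fintype.sum_prod_type_right, ← Finset.sum_add_distrib]
  refine Finset.sum_congr rfl fun y _ => ?_
  have hPβ := marginal_pos hp hpβ y
  have hQβ := marginal_pos hq hqβ y
  have hterm : ∀ x, p (x, y) * log (p (x, y) / q (x, y)) =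
      p (x, y) * log (pβ y / qβ y) +
        pβ y * (p (x, y) / pβ y * log (p (x, y) / pβ y / (q (x, y) / qβ y))) := by
    intro x
    have hratio : p (x, y) / pβ y / (q (x, y) / qβ y) = p (x, y) / q (x, y) / (pβ y / qβ y) := by
      field_simp
    rw [hratio, log_div (div_pos (hp _) (hq _)).ne' (div_pos hPβ hQβ).ne']
    field_simp
    ring
  rw [KLd, Finset.mul_sum, Finset.sum_congr rfl fun x _ => hterm x, Finset.sum_add_distrib,
    ← Finset.sum_mul, ← hpβ]

lemma condKLd_nonneg (hp : ∀ z, 0 < p z) (hq : ∀ z, 0 < q z)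
    (hpβ : ∀ y, pβ y = ∑ x, p (x, y)) (hqβ : ∀ y, qβ y = ∑ x, q (x, y)) :
    0 ≤ condKLd p q pβ qβ :=
  Finset.sum_nonneg fun y _ => mul_nonneg (marginal_pos hp hpβ y).le <|
    KLd_nonneg (fun x => div_nonneg (hp _).le (marginal_pos hp hpβ y).le)
      (fun x => div_pos (hq _) (marginal_pos hq hqβ y))
      (by rw [sum_div_marginal_eq_one hp hpβ, sum_div_marginal_eq_one hq hqβ])

lemma condKLd_eq_zero_iff (hp : ∀ z, 0 < p z) (hq : ∀ z, 0 < q z)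
    (hpβ : ∀ y, pβ y = ∑ x, p (x, y)) (hqβ : ∀ y, qβ y = ∑ x, q (x, y)) :
    condKLd p q pβ qβ = 0 ↔ ∀ y x, p (x, y) / pβ y = q (x, y) / qβ y := by
  have hsum : ∀ y, ∑ x, p (x, y) / pβ y = ∑ x, q (x, y) / qβ y := fun y => by
    rw [sum_div_marginal_eq_one hp hpβ, sum_div_marginal_eq_one hq hqβ]
  have hcond_nonneg : ∀ y x, 0 ≤ p (x, y) / pβ y := fun y x =>
    div_nonneg (hp _).le (marginal_pos hp hpβ y).le
  have hcond_pos : ∀ y x, 0 < q (x, y) / qβ y := fun y x => div_pos (hq _) (marginal_pos hq hqβ y)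
  rw [condKLd, Finset.sum_eq_zero_iff_of_nonneg fun y _ => mul_nonneg
    (marginal_pos hp hpβ y).le (KLd_nonneg (hcond_nonneg y) (hcond_pos y) (hsum y))]
  refine forall_congr' fun y => ?_
  rw [mul_eq_zero, or_iff_right (marginal_pos hp hpβ y).ne',
    KLd_eq_zero_iff (hcond_nonneg y) (hcond_pos y) (hsum y)]
  simp

end Marginal

end KLd

section Cfg

variable [DecidableEq D] (S : D → Type*) [∀ j, Fintype (S j)] [∀ j, DecidableEq (S j)]
  {a b c : Finset D}

def glueEquiv (hbc : b ⊆ c) : Cfg S (c \ b) × Cfg S b ≃ Cfg S c where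
  toFun p := glue S hbc p.1 p.2
  invFun x := (fun j => x ⟨j.1, (Finset.mem_sdiff.mp j.2).1⟩, fun j => x ⟨j.1, hbc j.2⟩)
  left_inv p := by
    refine Prod.ext ?_ ?_ <;> funext j
    · simp [glue, (Finset.mem_sdiff.mp j.2).2]
    · simp [glue, j.2]
  right_inv x := by
    funext j
    simp only [glue]
    split <;> rfl

lemma marg_eq_sum_glue (hbc : b ⊆ c) (h : Cfg S c → ℝ) (xb : Cfg S b) :
    marg S hbc h xb = ∑ xu : Cfg S (c \ b), h (glue S hbc xu xb) := by
  have hrestrict : ∀ xu xb', (fun j : b => glue S hbc xu xb' ⟨j.1, hbc j.2⟩) = xb' :=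
    fun xu xb' => funext fun j => by simp [glue, j.2]
  rw [marg, ← (glueEquiv S hbc).sum_comp, Fintype.sum_prod_type_right, Finset.sum_eq_single xb]
  · simp [glueEquiv, hrestrict]
  · intro xb' _ hne
    exact Finset.sum_eq_zero fun xu _ => by simp [glueEquiv, hrestrict, hne]
  · simp

lemma condRepl_piFinsetUnion (hbc : b ⊆ c) (hab : Disjoint a b) (f : Cfg S a → Cfg S b → ℝ)
    (h : Cfg S c → ℝ) (xa : Cfg S a) (xb : Cfg S b) :
    condRepl S hbc f h (Equiv.piFinsetUnion S hab (xa, xb)) = f xa xb * marg S hbc h xb := by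
  have hxa : (fun j : a => Equiv.piFinsetUnion S hab (xa, xb) ⟨j.1, Finset.mem_union_left b j.2⟩)
      = xa := funext fun j => Equiv.piFinsetUnion_left S hab j.2 _
  have hxb : (fun j : b => Equiv.piFinsetUnion S hab (xa, xb) ⟨j.1, Finset.mem_union_right a j.2⟩)
      = xb := funext fun j => Equiv.piFinsetUnion_right S hab j.2 _
  simp only [condRepl, hxa, hxb]

lemma KLd_condRepl (hbc : b ⊆ c) (hab : Disjoint a b) (f : Cfg S a → Cfg S b → ℝ)
    (hf : ∀ xb, ∑ xa, f xa xb = 1) (h g : Cfg S c → ℝ) :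
    KLd (condRepl S hbc f h) (condRepl S hbc f g) = KLd (marg S hbc h) (marg S hbc g) := by
  rw [← KLd_comp_equiv (Equiv.piFinsetUnion S hab), ← KLd_cond_mul_marginal f hf]
  congr 1 <;> funext ⟨xa, xb⟩ <;> exact condRepl_piFinsetUnion S hbc hab f _ xa xb

end Cfg

theorem condRepl_kl_contraction_general
    {D : Type*} [DecidableEq D]
    (S : D → Type*) [∀ j, Fintype (S j)] [∀ j, DecidableEq (S j)] [∀ j, Nonempty (S j)]
    (a b c : Finset D) (hbc : b ⊆ c) (hab : Disjoint a b)
    (f : Cfg S a → Cfg S b → ℝ)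
    (hf1 : ∀ xb, ∑ xa, f xa xb = 1)
    (h g : Cfg S c → ℝ)
    (hhpos : ∀ x, 0 < h x)
    (hgpos : ∀ x, 0 < g x) :
    (KLd h g - KLd (condRepl S hbc f h) (condRepl S hbc f g) =
      ∑ xb : Cfg S b, marg S hbc h xb *
        KLd (fun xu : Cfg S (c \ b) => h (glue S hbc xu xb) / marg S hbc h xb)
            (fun xu : Cfg S (c \ b) => g (glue S hbc xu xb) / marg S hbc g xb)) ∧
    (0 ≤ ∑ xb : Cfg S b, marg S hbc h xb *
        KLd (fun xu : Cfg S (c \ b) => h (glue S hbc xu xb) / marg S hbc h xb)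
            (fun xu : Cfg S (c \ b) => g (glue S hbc xu xb) / marg S hbc g xb)) ∧
    (KLd (condRepl S hbc f h) (condRepl S hbc f g) ≤ KLd h g) ∧
    (KLd (condRepl S hbc f h) (condRepl S hbc f g) = KLd h g ↔
      ∀ (xb : Cfg S b) (xu : Cfg S (c \ b)),
        h (glue S hbc xu xb) / marg S hbc h xb =
          g (glue S hbc xu xb) / marg S hbc g xb) := by
  have hp : ∀ z, 0 < (h ∘ glueEquiv S hbc) z := fun z => hhpos _
  have hq : ∀ z, 0 < (g ∘ glueEquiv S hbc) z := fun z => hgpos _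
  have hpβ := marg_eq_sum_glue S hbc h
  have hqβ := marg_eq_sum_glue S hbc g
  have hchain : KLd h g = KLd (marg S hbc h) (marg S hbc g) +
      condKLd (h ∘ glueEquiv S hbc) (g ∘ glueEquiv S hbc) (marg S hbc h) (marg S hbc g) := by
    rw [← KLd_comp_equiv (glueEquiv S hbc)]
    exact KLd_eq_KLd_marginal_add_condKLd hp hq hpβ hqβ
  rw [KLd_condRepl S hbc hab f hf1, hchain, add_sub_cancel_left, le_add_iff_nonneg_right,
    left_eq_add, condKLd_eq_zero_iff hp hq hpβ hqβ]
  have hnonneg := condKLd_nonneg hp hq hpβ hqβ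
  exact ⟨rfl, hnonneg, hnonneg, Iff.rfl⟩

/-- **The conditional replacement operator is a Kullback–Leibler contraction (Lemma 2).**
For positive pmfs `h`, `g` on the `c`-coordinates, with `b ⊆ c`, `u = c \ b`,
`a` disjoint from `b`, and a conditional pmf `f` of the `a`-coordinates given the
`b`-coordinates, the divergence drop `I(h; g) − I(T h; T g)` equals
`∑_{x_b} h_b (x_b) * I(h_{u∣b} (·∣x_b); g_{u∣b} (·∣x_b)) ≥ 0`; in particular
`I(T h; T g) ≤ I(h; g)`, with equality iff `h_{u∣b} = g_{u∣b}` everywhere. -/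
theorem condRepl_kl_contraction
    {D : Type*} [Fintype D] [DecidableEq D]
    (S : D → Type*) [∀ j, Fintype (S j)] [∀ j, DecidableEq (S j)] [∀ j, Nonempty (S j)]
    (a b c : Finset D) (hbc : b ⊆ c) (hab : Disjoint a b)
    (f : Cfg S a → Cfg S b → ℝ)
    (hf0 : ∀ xa xb, 0 ≤ f xa xb) (hf1 : ∀ xb, ∑ xa, f xa xb = 1)
    (h g : Cfg S c → ℝ)
    (hhpos : ∀ x, 0 < h x) (hhsum : ∑ x, h x = 1)
    (hgpos : ∀ x, 0 < g x) (hgsum : ∑ x, g x = 1) :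
    (KLd h g - KLd (condRepl S hbc f h) (condRepl S hbc f g) =
      ∑ xb : Cfg S b, marg S hbc h xb *
        KLd (fun xu : Cfg S (c \ b) => h (glue S hbc xu xb) / marg S hbc h xb)
            (fun xu : Cfg S (c \ b) => g (glue S hbc xu xb) / marg S hbc g xb)) ∧
    (0 ≤ ∑ xb : Cfg S b, marg S hbc h xb *
        KLd (fun xu : Cfg S (c \ b) => h (glue S hbc xu xb) / marg S hbc h xb)
            (fun xu : Cfg S (c \ b) => g (glue S hbc xu xb) / marg S hbc g xb)) ∧
    (KLd (condRepl S hbc f h) (condRepl S hbc f g) ≤ KLd h g) ∧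
    (KLd (condRepl S hbc f h) (condRepl S hbc f g) = KLd h g ↔
      ∀ (xb : Cfg S b) (xu : Cfg S (c \ b)),
        h (glue S hbc xu xb) / marg S hbc h xb =
          g (glue S hbc xu xb) / marg S hbc g xb) :=
  condRepl_kl_contraction_general S a b c hbc hab f hf1 h g hhpos hgpos
end
end

section
/- Let D be a finite index type with family S : D → Type of nonempty finite types, and let f be a positive pmf on ∏_{j∈D} S j. Let a_i, b_i ⊆ D for i ∈ Fin L (taken cyclically) with a_i ∩ b_i = ∅, c_i = a_i ∪ b_i, and b_{i+1} ⊆ c_i for all i, and let f_i(x_{a_i}|x_{b_i}) = f_{c_i}(x_{a_i}, x_{b_i}) / f_{b_i}(x_{b_i}) be the conditional pmfs derived from f. Then the marginals {f_{c_i} : 1 ≤ i ≤ L} are mutually stationary: for every i, applying the conditional replacement operator yields T_i(f_{c_i}) = f_{c_{i+1}}, i.e. f_{i+1}(x_{a_{i+1}}|x_{b_{i+1}}) · f_{b_{i+1}}(x_{b_{i+1}}) = f_{c_{i+1}}(x_{a_{i+1}}, x_{b_{i+1}}) for all arguments. -/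
noncomputable section

variable {D : Type*}

/-- Combine configurations on disjoint `a` and `b` into one on `a ∪ b`. -/
def unionGlue (S : D → Type*) [DecidableEq D] {a b : Finset D}
    (xa : Cfg S a) (xb : Cfg S b) : Cfg S (a ∪ b) :=
  fun j => if hj : j.1 ∈ a then xa ⟨j.1, hj⟩
           else xb ⟨j.1, (Finset.mem_union.mp j.2).resolve_left hj⟩

/-! Marginalising in stages is marginalising at once, so the `b (i+1)`-marginal of `f_{c_i}` is
`f_{b_{i+1}}` and `T_i (f_{c_i}) = f_{c_{i+1}} / f_{b_{i+1}} * f_{b_{i+1}}`. The quotient cancels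
even where `f_{b_{i+1}}` vanishes: a nonnegative function is pointwise at most its marginal, so
`f_{c_{i+1}}` vanishes there too. -/

section Marginals

variable [DecidableEq D] {S : D → Type*} [∀ j, Fintype (S j)] [∀ j, DecidableEq (S j)]

lemma marg_marg {b c d : Finset D} (hbc : b ⊆ c) (hcd : c ⊆ d) (h : Cfg S d → ℝ) :
    marg S hbc (marg S hcd h) = marg S (hbc.trans hcd) h := by
  funext xb
  simp only [marg, Finset.ite_sum_zero]
  rw [Finset.sum_comm]
  refine Finset.sum_congr rfl fun x _ => ?_
  rw [Finset.sum_eq_single_of_mem _ (Finset.mem_univ fun j : c => x ⟨j.1, hcd j.2⟩)]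
  · simp
  · intro y _ hy
    simp [Ne.symm hy]

lemma marg_nonneg {b c : Finset D} (hbc : b ⊆ c) {h : Cfg S c → ℝ} (hh : ∀ x, 0 ≤ h x)
    (xb : Cfg S b) : 0 ≤ marg S hbc h xb :=
  Finset.sum_nonneg fun x _ => ite_nonneg (hh x) le_rfl

lemma le_marg {b c : Finset D} (hbc : b ⊆ c) {h : Cfg S c → ℝ} (hh : ∀ x, 0 ≤ h x)
    (x : Cfg S c) : h x ≤ marg S hbc h (fun j : b => x ⟨j.1, hbc j.2⟩) := by
  rw [marg, ← Finset.sum_filter]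
  exact Finset.single_le_sum (fun y _ => hh y) (Finset.mem_filter.2 ⟨Finset.mem_univ x, rfl⟩)

lemma div_marg_mul_marg {b c : Finset D} (hbc : b ⊆ c) {h : Cfg S c → ℝ} (hh : ∀ x, 0 ≤ h x)
    (x : Cfg S c) :
    h x / marg S hbc h (fun j : b => x ⟨j.1, hbc j.2⟩) *
      marg S hbc h (fun j : b => x ⟨j.1, hbc j.2⟩) = h x := by
  by_cases hzero : marg S hbc h (fun j : b => x ⟨j.1, hbc j.2⟩) = 0
  · have hx : h x = 0 := le_antisymm (hzero ▸ le_marg hbc hh x) (hh x)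
    rw [hx, zero_div, zero_mul]
  · exact div_mul_cancel₀ _ hzero

end Marginals

lemma unionGlue_restrict [DecidableEq D] {S : D → Type*}
    {a b : Finset D} (x : Cfg S (a ∪ b)) :
    unionGlue S (fun j : a => x ⟨j.1, Finset.mem_union_left b j.2⟩)
      (fun j : b => x ⟨j.1, Finset.mem_union_right a j.2⟩) = x := by
  funext j
  unfold unionGlue
  split <;> rfl

theorem marginals_mutually_stationary_general
    {D : Type*} [Fintype D] [DecidableEq D]
    (S : D → Type*) [∀ j, Fintype (S j)] [∀ j, DecidableEq (S j)]
    (f : Cfg S (Finset.univ : Finset D) → ℝ)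
    (hfpos : ∀ x, 0 < f x)
    {L : ℕ} [NeZero L] (a b : Fin L → Finset D)
    (hcyc : ∀ i, b (i + 1) ⊆ a i ∪ b i)
    (fc : ∀ i, Cfg S (a i) → Cfg S (b i) → ℝ)
    (hfc : ∀ i (xa : Cfg S (a i)) (xb : Cfg S (b i)),
      fc i xa xb =
        marg S (Finset.subset_univ (a i ∪ b i)) f (unionGlue S xa xb) /
          marg S (Finset.subset_univ (b i)) f xb) :
    ∀ i : Fin L,
      condRepl S (hcyc i) (fc (i + 1))
          (marg S (Finset.subset_univ (a i ∪ b i)) f) =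
        marg S (Finset.subset_univ (a (i + 1) ∪ b (i + 1))) f := by
  intro i
  funext x
  have hf : ∀ y, 0 ≤ f y := fun y => (hfpos y).le
  simp only [condRepl, hfc, marg_marg, unionGlue_restrict]
  rw [← marg_marg Finset.subset_union_right (Finset.subset_univ (a (i + 1) ∪ b (i + 1)))]
  exact div_marg_mul_marg Finset.subset_union_right (marg_nonneg _ hf) x

/-- **The marginals `f_{c_i}` of a joint pmf are mutually stationary.**
Let `f` be a positive pmf on all of the `D`-coordinates, `⟨a i, b i⟩` a
permissible updating cycle with `a i ∩ b i = ∅` and `b (i+1) ⊆ c i = a i ∪ b i`,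
and let `fc i` be the conditional pmf of the `a i`-coordinates given the
`b i`-coordinates derived from `f`.  Then for every `i`, applying the
conditional replacement operator to the `c i`-marginal of `f` yields the
`c (i+1)`-marginal of `f`: `T_i (f_{c_i}) = f_{c_{i+1}}`. -/
theorem marginals_mutually_stationary
    {D : Type*} [Fintype D] [DecidableEq D]
    (S : D → Type*) [∀ j, Fintype (S j)] [∀ j, DecidableEq (S j)] [∀ j, Nonempty (S j)]
    (f : Cfg S (Finset.univ : Finset D) → ℝ)
    (hfpos : ∀ x, 0 < f x) (hfsum : ∑ x, f x = 1)
    {L : ℕ} [NeZero L] (a b : Fin L → Finset D)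
    (hdisj : ∀ i, Disjoint (a i) (b i))
    (hcyc : ∀ i, b (i + 1) ⊆ a i ∪ b i)
    (fc : ∀ i, Cfg S (a i) → Cfg S (b i) → ℝ)
    (hfc : ∀ i (xa : Cfg S (a i)) (xb : Cfg S (b i)),
      fc i xa xb =
        marg S (Finset.subset_univ (a i ∪ b i)) f (unionGlue S xa xb) /
          marg S (Finset.subset_univ (b i)) f xb) :
    ∀ i : Fin L,
      condRepl S (hcyc i) (fc (i + 1))
          (marg S (Finset.subset_univ (a i ∪ b i)) f) =
        marg S (Finset.subset_univ (a (i + 1) ∪ b (i + 1))) f :=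
  marginals_mutually_stationary_general S f hfpos a b hcyc fc hfc
end
end

section
/- Let X and Y be nonempty finite types and let f be a positive pmf on X × Y with (X|Y)-conditional f12 and (Y|X)-conditional f21. Define the I-projection operators on pmfs q on X × Y by I1(q)(x,y) = f12(x|y) · q2(y) and I2(q)(x,y) = f21(y|x) · q1(x), where q1 and q2 are the X- and Y-marginals of q. Then for every positive pmf q^{(0)} on X × Y, the iterates (I1 ∘ I2)^n (q^{(0)}) converge to f as n → ∞ (equivalently, I(f ; (I1 ∘ I2)^n (q^{(0)})) → 0). -/
/-!
Read the conditionals `P = f12` and `Q = f21` as stochastic matrices. Then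
`I2 (f · h(y)) = f · (Q h)(x)` and `I1 (f · v(x)) = f · (P v)(y)`, so after one step the
iterates are `f · ((P Q)ⁿ h₀)(y)`. The matrix `P Q` has positive entries, hence contracts the
spread `max - min` geometrically (Doeblin), and it fixes the `f`-marginal average, which equals
the total mass `1` of `q⁽⁰⁾`. So `(P Q)ⁿ h₀ → 1` and the iterates converge to `f`.
-/

open Finset Filter Matrix Topology

section Spread

variable {n : Type*} [Fintype n] [Nonempty n]

def spread (g : n → ℝ) : ℝ := univ.sup' univ_nonempty g - univ.inf' univ_nonempty g

lemma inf'_le_dotProduct {w : n → ℝ} (hw₀ : ∀ i, 0 ≤ w i) (hw₁ : ∑ i, w i = 1) (g : n → ℝ) :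
    univ.inf' univ_nonempty g ≤ w ⬝ᵥ g :=
  calc univ.inf' univ_nonempty g = ∑ i, w i * univ.inf' univ_nonempty g := by
        rw [← sum_mul, hw₁, one_mul]
    _ ≤ w ⬝ᵥ g := sum_le_sum fun i _ => mul_le_mul_of_nonneg_left (inf'_le _ (mem_univ i)) (hw₀ i)

lemma dotProduct_le_sup' {w : n → ℝ} (hw₀ : ∀ i, 0 ≤ w i) (hw₁ : ∑ i, w i = 1) (g : n → ℝ) :
    w ⬝ᵥ g ≤ univ.sup' univ_nonempty g :=
  calc w ⬝ᵥ g ≤ ∑ i, w i * univ.sup' univ_nonempty g :=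
        sum_le_sum fun i _ => mul_le_mul_of_nonneg_left (le_sup' _ (mem_univ i)) (hw₀ i)
    _ = univ.sup' univ_nonempty g := by rw [← sum_mul, hw₁, one_mul]

lemma abs_sub_le_spread {g : n → ℝ} {c : ℝ} (hinf : univ.inf' univ_nonempty g ≤ c)
    (hsup : c ≤ univ.sup' univ_nonempty g) (i : n) : |g i - c| ≤ spread g := by
  have := inf'_le g (mem_univ i)
  have := le_sup' g (mem_univ i)
  rw [spread, abs_sub_le_iff]
  constructor <;> linarith

variable [DecidableEq n] {A : Matrix n n ℝ} {ε : ℝ}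

/-- Doeblin's bound: every row of `A` gives weight at least `ε` to a minimiser of `g`. -/
lemma mulVec_le_sup'_sub (hA : A ∈ rowStochastic ℝ n) (hε : ∀ i j, ε ≤ A i j) (g : n → ℝ)
    (i : n) : (A *ᵥ g) i ≤ univ.sup' univ_nonempty g - ε * spread g := by
  set M := univ.sup' univ_nonempty g
  obtain ⟨j, -, hj⟩ := exists_mem_eq_inf' univ_nonempty g
  have hgap : M - (A *ᵥ g) i = ∑ k, A i k * (M - g k) := by
    simp only [mulVec, dotProduct, mul_sub, sum_sub_distrib, ← sum_mul,
      sum_row_of_mem_rowStochastic hA, one_mul]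
  have hsingle : A i j * (M - g j) ≤ ∑ k, A i k * (M - g k) :=
    single_le_sum (f := fun k => A i k * (M - g k))
      (fun k _ => mul_nonneg (nonneg_of_mem_rowStochastic hA)
        (sub_nonneg.2 (le_sup' g (mem_univ k)))) (mem_univ j)
  have hspread : ε * spread g ≤ A i j * (M - g j) := by
    rw [spread, hj]
    exact mul_le_mul_of_nonneg_right (hε i j) (sub_nonneg.2 (le_sup' g (mem_univ j)))
  linarith

lemma spread_mulVec_le (hA : A ∈ rowStochastic ℝ n) (hε : ∀ i j, ε ≤ A i j) (g : n → ℝ) :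
    spread (A *ᵥ g) ≤ (1 - ε) * spread g := by
  have hsup : univ.sup' univ_nonempty (A *ᵥ g) ≤ univ.sup' univ_nonempty g - ε * spread g :=
    sup'_le _ _ fun i _ => mulVec_le_sup'_sub hA hε g i
  have hinf : univ.inf' univ_nonempty g ≤ univ.inf' univ_nonempty (A *ᵥ g) :=
    le_inf' _ _ fun i _ => inf'_le_dotProduct (fun _ => nonneg_of_mem_rowStochastic hA)
      (sum_row_of_mem_rowStochastic hA i) g
  simp only [spread] at hsup ⊢
  linarith

lemma spread_iterate_mulVec_le (hA : A ∈ rowStochastic ℝ n) (hε : ∀ i j, ε ≤ A i j)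
    (hε₁ : ε ≤ 1) (g : n → ℝ) (k : ℕ) :
    spread (A.mulVec^[k] g) ≤ (1 - ε) ^ k * spread g := by
  induction k with
  | zero => simp
  | succ k ih =>
    rw [Function.iterate_succ_apply', pow_succ', mul_assoc]
    exact (spread_mulVec_le hA hε _).trans (mul_le_mul_of_nonneg_left ih (by linarith))

theorem tendsto_iterate_mulVec_of_vecMul_eq (hA : A ∈ rowStochastic ℝ n)
    (hpos : ∀ i j, 0 < A i j) {w : n → ℝ} (hw₀ : ∀ i, 0 ≤ w i) (hw₁ : ∑ i, w i = 1)
    (hwA : w ᵥ* A = w) (g : n → ℝ) (i : n) :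
    Tendsto (fun k => (A.mulVec^[k] g) i) atTop (𝓝 (w ⬝ᵥ g)) := by
  obtain ⟨p, hp⟩ := Finite.exists_min fun p : n × n => A p.1 p.2
  have hε : ∀ i j, A p.1 p.2 ≤ A i j := fun i j => hp (i, j)
  have hinv : ∀ k, w ⬝ᵥ A.mulVec^[k] g = w ⬝ᵥ g := by
    intro k
    induction k with
    | zero => rfl
    | succ k ih => rw [Function.iterate_succ_apply', dotProduct_mulVec, hwA, ih]
  have hbound : ∀ k, ‖(A.mulVec^[k] g) i - w ⬝ᵥ g‖ ≤ (1 - A p.1 p.2) ^ k * spread g := by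
    intro k
    rw [Real.norm_eq_abs, ← hinv k]
    exact (abs_sub_le_spread (inf'_le_dotProduct hw₀ hw₁ _) (dotProduct_le_sup' hw₀ hw₁ _)
      i).trans (spread_iterate_mulVec_le hA hε (le_one_of_mem_rowStochastic hA) g k)
  have hgeom : Tendsto (fun k => (1 - A p.1 p.2) ^ k * spread g) atTop (𝓝 0) := by
    simpa using (tendsto_pow_atTop_nhds_zero_of_lt_one
      (by linarith [le_one_of_mem_rowStochastic hA (i := p.1) (j := p.2)])
      (by linarith [hpos p.1 p.2])).mul_const (spread g)
  exact tendsto_iff_norm_sub_tendsto_zero.2 (squeeze_zero (fun _ => norm_nonneg _) hbound hgeom)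

end Spread

noncomputable section IProjection

variable {X Y : Type*} (f : X × Y → ℝ)

def marginalFst [Fintype Y] (x : X) : ℝ := ∑ y, f (x, y)

def marginalSnd [Fintype X] (y : Y) : ℝ := ∑ x, f (x, y)

/-- The `(X|Y)`-conditional `f12`, with rows indexed by the conditioning variable `y`. -/
def condFst [Fintype X] : Matrix Y X ℝ := fun y x => f (x, y) / marginalSnd f y

/-- The `(Y|X)`-conditional `f21`, with rows indexed by the conditioning variable `x`. -/
def condSnd [Fintype Y] : Matrix X Y ℝ := fun x y => f (x, y) / marginalFst f x

def iProj1 [Fintype X] (q : X × Y → ℝ) (z : X × Y) : ℝ := condFst f z.2 z.1 * marginalSnd q z.2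

def iProj2 [Fintype Y] (q : X × Y → ℝ) (z : X × Y) : ℝ := condSnd f z.1 z.2 * marginalFst q z.1

variable {f}

lemma marginalFst_pos [Fintype Y] [Nonempty Y] (hf : ∀ z, 0 < f z) (x : X) :
    0 < marginalFst f x :=
  sum_pos (fun y _ => hf (x, y)) univ_nonempty

lemma marginalSnd_pos [Fintype X] [Nonempty X] (hf : ∀ z, 0 < f z) (y : Y) :
    0 < marginalSnd f y :=
  sum_pos (fun x _ => hf (x, y)) univ_nonempty

lemma condFst_mulVec_one [Fintype X] [Nonempty X] (hf : ∀ z, 0 < f z) : condFst f *ᵥ 1 = 1 := by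
  ext y
  simp only [mulVec, dotProduct, condFst, Pi.one_apply, mul_one, ← sum_div]
  exact div_self (marginalSnd_pos hf y).ne'

lemma condSnd_mulVec_one [Fintype Y] [Nonempty Y] (hf : ∀ z, 0 < f z) : condSnd f *ᵥ 1 = 1 := by
  ext x
  simp only [mulVec, dotProduct, condSnd, Pi.one_apply, mul_one, ← sum_div]
  exact div_self (marginalFst_pos hf x).ne'

lemma marginalSnd_vecMul_condFst [Fintype X] [Fintype Y] [Nonempty X] (hf : ∀ z, 0 < f z) :
    marginalSnd f ᵥ* condFst f = marginalFst f := by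
  ext x
  simp only [vecMul, dotProduct, condFst, mul_div_cancel₀ _ (marginalSnd_pos hf _).ne']
  rfl

lemma marginalFst_vecMul_condSnd [Fintype X] [Fintype Y] [Nonempty Y] (hf : ∀ z, 0 < f z) :
    marginalFst f ᵥ* condSnd f = marginalSnd f := by
  ext y
  simp only [vecMul, dotProduct, condSnd, mul_div_cancel₀ _ (marginalFst_pos hf _).ne']
  rfl

lemma condFst_mul_condSnd_pos [Fintype X] [Fintype Y] [Nonempty X] [Nonempty Y]
    (hf : ∀ z, 0 < f z) (y y' : Y) :
    0 < (condFst f * condSnd f) y y' :=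
  sum_pos (fun x _ => mul_pos (div_pos (hf _) (marginalSnd_pos hf y))
    (div_pos (hf _) (marginalFst_pos hf x))) univ_nonempty

lemma condFst_mul_condSnd_mem_rowStochastic [Fintype X] [Fintype Y] [DecidableEq Y]
    [Nonempty X] [Nonempty Y] (hf : ∀ z, 0 < f z) : condFst f * condSnd f ∈ rowStochastic ℝ Y :=
  mem_rowStochastic.2 ⟨fun y y' => (condFst_mul_condSnd_pos hf y y').le, by
    rw [← mulVec_mulVec, condSnd_mulVec_one hf, condFst_mulVec_one hf]⟩

lemma iProj1_mul_fst [Fintype X] (v : X → ℝ) :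
    iProj1 f (fun z => f z * v z.1) = fun z => f z * (condFst f *ᵥ v) z.2 := by
  ext ⟨x, y⟩
  simp only [iProj1, condFst, marginalSnd, mulVec, dotProduct, mul_sum]
  exact sum_congr rfl fun x' _ => by ring

lemma iProj2_eq_mul_fst [Fintype Y] (q : X × Y → ℝ) :
    iProj2 f q = fun z => f z * (marginalFst q / marginalFst f) z.1 := by
  ext ⟨x, y⟩
  simp only [iProj2, condSnd, Pi.div_apply]
  ring

lemma marginalFst_mul_snd_div [Fintype Y] (h : Y → ℝ) :
    marginalFst (fun z => f z * h z.2) / marginalFst f = condSnd f *ᵥ h := by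
  ext x
  simp only [Pi.div_apply, marginalFst, mulVec, dotProduct, condSnd, sum_div]
  exact sum_congr rfl fun y _ => by ring

lemma iProj1_comp_iProj2 [Fintype X] [Fintype Y] (q : X × Y → ℝ) :
    (iProj1 f ∘ iProj2 f) q =
      fun z => f z * (condFst f *ᵥ (marginalFst q / marginalFst f)) z.2 := by
  rw [Function.comp_apply, iProj2_eq_mul_fst, iProj1_mul_fst]

lemma semiconj_iProj1_comp_iProj2 [Fintype X] [Fintype Y] :
    Function.Semiconj (fun (h : Y → ℝ) z => f z * h z.2) (condFst f * condSnd f).mulVec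
      (iProj1 f ∘ iProj2 f) := fun h => by
  rw [iProj1_comp_iProj2, marginalFst_mul_snd_div, mulVec_mulVec]

end IProjection

theorem gibbs_I_projection_converges_general
    {X Y : Type*} [Fintype X] [Fintype Y]
    (f : X × Y → ℝ) (hfpos : ∀ z, 0 < f z) (hfsum : ∑ z, f z = 1)
    (I1 I2 : (X × Y → ℝ) → (X × Y → ℝ))
    (hI1 : ∀ (q : X × Y → ℝ) (z : X × Y),
      I1 q z = (f z / ∑ x', f (x', z.2)) * ∑ x', q (x', z.2))
    (hI2 : ∀ (q : X × Y → ℝ) (z : X × Y),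
      I2 q z = (f z / ∑ y', f (z.1, y')) * ∑ y', q (z.1, y'))
    (q0 : X × Y → ℝ) (hq0sum : ∑ z, q0 z = 1) :
    ∀ z : X × Y,
      Filter.Tendsto (fun n : ℕ => (I1 ∘ I2)^[n] q0 z) Filter.atTop (nhds (f z)) := by
  classical
  rintro ⟨x, y⟩
  have : Nonempty X := ⟨x⟩
  have : Nonempty Y := ⟨y⟩
  obtain rfl : I1 = iProj1 f := funext₂ hI1
  obtain rfl : I2 = iProj2 f := funext₂ hI2
  set h₀ := condFst f *ᵥ (marginalFst q0 / marginalFst f)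
  have hiter : ∀ n, (iProj1 f ∘ iProj2 f)^[n + 1] q0 =
      fun z => f z * ((condFst f * condSnd f).mulVec^[n] h₀) z.2 := fun n => by
    rw [Function.iterate_succ_apply, iProj1_comp_iProj2]
    exact (semiconj_iProj1_comp_iProj2.iterate_right n h₀).symm
  have hmass : marginalSnd f ⬝ᵥ h₀ = 1 := by
    rw [dotProduct_mulVec, marginalSnd_vecMul_condFst hfpos, ← hq0sum, Fintype.sum_prod_type]
    exact sum_congr rfl fun x _ => mul_div_cancel₀ _ (marginalFst_pos hfpos x).ne'
  have hlim := tendsto_iterate_mulVec_of_vecMul_eq (condFst_mul_condSnd_mem_rowStochastic hfpos)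
    (condFst_mul_condSnd_pos hfpos) (fun y => (marginalSnd_pos hfpos y).le)
    (by rw [← hfsum, Fintype.sum_prod_type_right]; rfl)
    (by rw [← vecMul_vecMul, marginalSnd_vecMul_condFst hfpos, marginalFst_vecMul_condSnd hfpos])
    h₀ y
  rw [hmass] at hlim
  refine (tendsto_add_atTop_iff_nat 1).1 ?_
  simpa [hiter] using hlim.const_mul (f (x, y))

/-- **Convergence of alternating `I`-projections to the joint pmf (compatible case).**
Let `f` be a positive pmf on `X × Y` with `(X|Y)`-conditional `f12` and
`(Y|X)`-conditional `f21`, and let `I1`, `I2` be the `I`-projection operators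
`I1 (q) (x, y) = f12 x y * q2 y` and `I2 (q) (x, y) = f21 y x * q1 x`.
Then for every positive pmf `q0` on `X × Y`, the iterates `(I1 ∘ I2)^[n] q0`
converge (pointwise, hence in Kullback–Leibler divergence) to `f`. -/
theorem gibbs_I_projection_converges
    {X Y : Type*} [Fintype X] [Fintype Y] [Nonempty X] [Nonempty Y]
    (f : X × Y → ℝ) (hfpos : ∀ z, 0 < f z) (hfsum : ∑ z, f z = 1)
    (I1 I2 : (X × Y → ℝ) → (X × Y → ℝ))
    (hI1 : ∀ (q : X × Y → ℝ) (z : X × Y),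
      I1 q z = (f z / ∑ x', f (x', z.2)) * ∑ x', q (x', z.2))
    (hI2 : ∀ (q : X × Y → ℝ) (z : X × Y),
      I2 q z = (f z / ∑ y', f (z.1, y')) * ∑ y', q (z.1, y'))
    (q0 : X × Y → ℝ) (hq0pos : ∀ z, 0 < q0 z) (hq0sum : ∑ z, q0 z = 1) :
    ∀ z : X × Y,
      Filter.Tendsto (fun n : ℕ => (I1 ∘ I2)^[n] q0 z) Filter.atTop (nhds (f z)) :=
  gibbs_I_projection_converges_general f hfpos hfsum I1 I2 hI1 hI2 q0 hq0sum
end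

section
/- Let X and Y be nonempty finite types, let f12 be a strictly positive conditional pmf of X given Y and f21 a strictly positive conditional pmf of Y given X (not assumed compatible). Define I1(q)(x,y) = f12(x|y) · q2(y) and I2(q)(x,y) = f21(y|x) · q1(x) on pmfs q on X × Y. Then for any positive initial pmf q^{(0)} on X × Y, the even iterates (I1 ∘ I2)^n (q^{(0)}) converge as n → ∞ to a pmf π^{(2,1)} whose (X|Y)-conditional equals f12 and which is a fixed point of I1 ∘ I2, and the odd iterates I2((I1 ∘ I2)^n (q^{(0)})) converge to a pmf π^{(1,2)} whose (Y|X)-conditional equals f21 and which is a fixed point of I2 ∘ I1. -/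
open Filter Finset

lemma markov_converge {X : Type*} [Fintype X] [Nonempty X]
    (K : X → X → ℝ) (hKpos : ∀ x x', 0 < K x x') (hKsum : ∀ x', ∑ x, K x x' = 1)
    (p0 : X → ℝ) (hp0 : ∀ x, 0 ≤ p0 x) (hp0sum : ∑ x, p0 x = 1) :
    ∃ μ : X → ℝ, (∀ x, 0 ≤ μ x) ∧ (∑ x, μ x = 1) ∧
      (∀ x, μ x = ∑ x', K x x' * μ x') ∧
      ∀ x, Tendsto (fun n => (fun p x => ∑ x', K x x' * p x')^[n] p0 x) atTop
        (nhds (μ x)) := by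
  set M : (X → ℝ) → (X → ℝ) := fun p x => ∑ x', K x x' * p x' with hM
  -- minimum entry
  set ε : ℝ := Finset.univ.inf' (by simp) (fun z : X × X => K z.1 z.2) with hε
  have hεpos : 0 < ε := by
    rw [hε, Finset.lt_inf'_iff]
    exact fun z _ => hKpos z.1 z.2
  have hεle : ∀ x x', ε ≤ K x x' := fun x x' =>
    Finset.inf'_le _ (Finset.mem_univ ((x, x') : X × X))
  set r : ℝ := 1 - (Fintype.card X : ℝ) * ε with hr
  have hcard : ∀ _x' : X, (Fintype.card X : ℝ) * ε ≤ 1 := by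
    intro x'
    calc (Fintype.card X : ℝ) * ε = ∑ _x : X, ε := by
          rw [Finset.sum_const, Finset.card_univ, nsmul_eq_mul]
      _ ≤ ∑ x, K x x' := Finset.sum_le_sum fun x _ => hεle x x'
      _ = 1 := hKsum x'
  have hr0 : 0 ≤ r := by
    have := hcard (Classical.arbitrary X); linarith
  have hr1 : r < 1 := by
    have h1 : (0:ℝ) < (Fintype.card X : ℝ) := by
      exact_mod_cast Fintype.card_pos
    nlinarith
  -- contraction on mean-zero vectors
  have contract : ∀ v : X → ℝ, ∑ x, v x = 0 →
      ∑ z, |∑ x, K z x * v x| ≤ r * ∑ x, |v x| := by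
    intro v hv
    have key : ∀ z, |∑ x, K z x * v x| ≤ ∑ x, (K z x - ε) * |v x| := by
      intro z
      have e1 : ∑ x, K z x * v x = ∑ x, (K z x - ε) * v x := by
        simp [sub_mul, Finset.sum_sub_distrib, ← Finset.mul_sum, hv]
      rw [e1]
      refine (Finset.abs_sum_le_sum_abs _ _).trans (Finset.sum_le_sum fun x _ => ?_)
      rw [abs_mul, abs_of_nonneg (sub_nonneg.2 (hεle z x))]
    calc ∑ z, |∑ x, K z x * v x| ≤ ∑ z, ∑ x, (K z x - ε) * |v x| :=
          Finset.sum_le_sum fun z _ => key z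
      _ = ∑ x, (∑ z, (K z x - ε)) * |v x| := by
          rw [Finset.sum_comm]
          exact Finset.sum_congr rfl fun x _ => by rw [Finset.sum_mul]
      _ = r * ∑ x, |v x| := by
          rw [Finset.mul_sum]
          refine Finset.sum_congr rfl fun x _ => ?_
          rw [Finset.sum_sub_distrib, hKsum x, Finset.sum_const, Finset.card_univ,
            nsmul_eq_mul, hr]
  -- iterates
  set p : ℕ → X → ℝ := fun n => M^[n] p0 with hp
  have hpsucc : ∀ n, p (n + 1) = M (p n) := by
    intro n; rw [hp]; simp [Function.iterate_succ_apply']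
  have hpsum : ∀ n, ∑ x, p n x = 1 := by
    intro n
    induction n with
    | zero => simpa [hp] using hp0sum
    | succ n ih =>
      rw [hpsucc n, hM]
      simp only
      rw [Finset.sum_comm]
      calc ∑ x', ∑ x, K x x' * p n x' = ∑ x', p n x' := by
            refine Finset.sum_congr rfl fun x' _ => ?_
            rw [← Finset.sum_mul, hKsum, one_mul]
        _ = 1 := ih
  have hpnonneg : ∀ n x, 0 ≤ p n x := by
    intro n
    induction n with
    | zero => simpa [hp] using hp0
    | succ n ih =>
      intro x
      rw [hpsucc n]
      exact Finset.sum_nonneg fun x' _ => mul_nonneg (hKpos x x').le (ih x')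
  -- geometric decay of ℓ¹ distances between consecutive iterates
  set d : ℕ → ℝ := fun n => ∑ x, |p (n + 1) x - p n x| with hd
  have hdstep : ∀ n, d (n + 1) ≤ r * d n := by
    intro n
    have hv : ∑ x, (p (n + 1) x - p n x) = 0 := by
      rw [Finset.sum_sub_distrib, hpsum, hpsum, sub_self]
    have e : ∀ z, p (n + 2) z - p (n + 1) z = ∑ x, K z x * (p (n + 1) x - p n x) := by
      intro z
      rw [hpsucc (n + 1), hpsucc n, hM]
      simp only
      rw [← Finset.sum_sub_distrib]
      exact Finset.sum_congr rfl fun x _ => (mul_sub _ _ _).symm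
    calc d (n + 1) = ∑ z, |∑ x, K z x * (p (n + 1) x - p n x)| := by
          exact Finset.sum_congr rfl fun z _ => by rw [e z]
      _ ≤ r * d n := contract _ hv
  have hdgeo : ∀ n, d n ≤ d 0 * r ^ n := by
    intro n
    induction n with
    | zero => simp
    | succ n ih =>
      calc d (n + 1) ≤ r * d n := hdstep n
        _ ≤ r * (d 0 * r ^ n) := by
            exact mul_le_mul_of_nonneg_left ih hr0
        _ = d 0 * r ^ (n + 1) := by ring
  -- each coordinate is Cauchy
  have hcauchy : ∀ x, CauchySeq (fun n => p n x) := by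
    intro x
    refine cauchySeq_of_le_geometric r (d 0) hr1 fun n => ?_
    rw [Real.dist_eq]
    calc |p n x - p (n + 1) x| = |p (n + 1) x - p n x| := abs_sub_comm _ _
      _ ≤ d n := Finset.single_le_sum (f := fun x => |p (n + 1) x - p n x|)
          (fun i _ => abs_nonneg _) (Finset.mem_univ x)
      _ ≤ d 0 * r ^ n := hdgeo n
  have hlim : ∀ x, ∃ l : ℝ, Tendsto (fun n => p n x) atTop (nhds l) :=
    fun x => cauchySeq_tendsto_of_complete (hcauchy x)
  choose μ hμ using hlim
  refine ⟨μ, ?_, ?_, ?_, hμ⟩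
  · exact fun x => ge_of_tendsto' (hμ x) fun n => hpnonneg n x
  · have : Tendsto (fun n => ∑ x, p n x) atTop (nhds (∑ x, μ x)) :=
      tendsto_finset_sum _ fun x _ => hμ x
    have h1 : Tendsto (fun _ : ℕ => (1:ℝ)) atTop (nhds (∑ x, μ x)) := by
      simpa [hpsum] using this
    exact tendsto_nhds_unique h1 tendsto_const_nhds
  · intro x
    have h1 : Tendsto (fun n => p (n + 1) x) atTop (nhds (μ x)) :=
      (tendsto_add_atTop_iff_nat 1).mpr (hμ x)
    have h2 : Tendsto (fun n => ∑ x', K x x' * p n x') atTop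
        (nhds (∑ x', K x x' * μ x')) :=
      tendsto_finset_sum _ fun x' _ => (hμ x').const_mul _
    have h3 : (fun n => p (n + 1) x) = fun n => ∑ x', K x x' * p n x' := by
      funext n; rw [hpsucc n]
    rw [h3] at h1
    exact tendsto_nhds_unique h1 h2

/-- **Convergence of the pseudo-Gibbs sampler to the two pseudo-Gibbs distributions.**
Let `f12` and `f21` be strictly positive conditional pmfs of `X` given `Y` and of
`Y` given `X` (not assumed compatible), with `I`-projection operators
`I1 (q) (x, y) = f12 x y * q2 y` and `I2 (q) (x, y) = f21 y x * q1 x`.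
Then for any positive initial pmf `q0`, the even iterates `(I1 ∘ I2)^[n] q0`
converge to a pmf `π21` whose `(X|Y)`-conditional is `f12` and which is a fixed
point of `I1 ∘ I2`, and the odd iterates `I2 ((I1 ∘ I2)^[n] q0)` converge to a
pmf `π12` whose `(Y|X)`-conditional is `f21` and which is a fixed point of
`I2 ∘ I1`. -/
theorem pseudo_gibbs_converges
    {X Y : Type*} [Fintype X] [Fintype Y] [Nonempty X] [Nonempty Y]
    (f12 : X → Y → ℝ) (hf12pos : ∀ x y, 0 < f12 x y) (hf12sum : ∀ y, ∑ x, f12 x y = 1)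
    (f21 : Y → X → ℝ) (hf21pos : ∀ y x, 0 < f21 y x) (hf21sum : ∀ x, ∑ y, f21 y x = 1)
    (I1 I2 : (X × Y → ℝ) → (X × Y → ℝ))
    (hI1 : ∀ (q : X × Y → ℝ) (z : X × Y), I1 q z = f12 z.1 z.2 * ∑ x', q (x', z.2))
    (hI2 : ∀ (q : X × Y → ℝ) (z : X × Y), I2 q z = f21 z.2 z.1 * ∑ y', q (z.1, y'))
    (q0 : X × Y → ℝ) (hq0pos : ∀ z, 0 < q0 z) (hq0sum : ∑ z, q0 z = 1) :
    ∃ π21 π12 : X × Y → ℝ,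
      (∀ z : X × Y,
        Filter.Tendsto (fun n : ℕ => (I1 ∘ I2)^[n] q0 z) Filter.atTop (nhds (π21 z))) ∧
      (∀ z, 0 ≤ π21 z) ∧ (∑ z, π21 z = 1) ∧
      (∀ x y, π21 (x, y) / (∑ x', π21 (x', y)) = f12 x y) ∧
      I1 (I2 π21) = π21 ∧
      (∀ z : X × Y,
        Filter.Tendsto (fun n : ℕ => I2 ((I1 ∘ I2)^[n] q0) z) Filter.atTop (nhds (π12 z))) ∧
      (∀ z, 0 ≤ π12 z) ∧ (∑ z, π12 z = 1) ∧
      (∀ x y, π12 (x, y) / (∑ y', π12 (x, y')) = f21 y x) ∧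
      I2 (I1 π12) = π12 := by
  classical
  set K : X → X → ℝ := fun x x' => ∑ y, f12 x y * f21 y x' with hKdef
  have hKpos : ∀ x x', 0 < K x x' := fun x x' =>
    Finset.sum_pos (fun y _ => mul_pos (hf12pos x y) (hf21pos y x')) Finset.univ_nonempty
  have hKsum : ∀ x', ∑ x, K x x' = 1 := by
    intro x'
    rw [hKdef]
    simp only
    rw [Finset.sum_comm]
    calc ∑ y, ∑ x, f12 x y * f21 y x' = ∑ y, f21 y x' := by
          refine Finset.sum_congr rfl fun y _ => ?_
          rw [← Finset.sum_mul, hf12sum, one_mul]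
      _ = 1 := hf21sum x'
  set p0 : X → ℝ := fun x => ∑ y, q0 (x, y) with hp0def
  have hp0 : ∀ x, 0 ≤ p0 x := fun x =>
    Finset.sum_nonneg fun y _ => (hq0pos (x, y)).le
  have hp0sum : ∑ x, p0 x = 1 := by
    rw [hp0def]; rw [← Fintype.sum_prod_type]; exact hq0sum
  obtain ⟨μ, hμ0, hμsum, hμfix, hμtend⟩ := markov_converge K hKpos hKsum p0 hp0 hp0sum
  set M : (X → ℝ) → (X → ℝ) := fun p x => ∑ x', K x x' * p x' with hMdef
  have hx0 : ∃ x0, 0 < μ x0 := by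
    by_contra h
    push_neg at h
    have : ∑ x, μ x ≤ 0 := Finset.sum_nonpos fun x _ => h x
    rw [hμsum] at this; linarith
  have hμpos : ∀ x, 0 < μ x := by
    obtain ⟨x0, hx0⟩ := hx0
    intro x
    rw [hμfix x]
    exact Finset.sum_pos' (fun x' _ => mul_nonneg (hKpos x x').le (hμ0 x'))
      ⟨x0, Finset.mem_univ _, mul_pos (hKpos x x0) hx0⟩
  set g : Y → ℝ := fun y => ∑ x', f21 y x' * μ x' with hgdef
  have hgpos : ∀ y, 0 < g y := fun y =>
    Finset.sum_pos (fun x' _ => mul_pos (hf21pos y x') (hμpos x')) Finset.univ_nonempty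
  set π21 : X × Y → ℝ := fun z => f12 z.1 z.2 * g z.2 with hπ21def
  set π12 : X × Y → ℝ := fun z => f21 z.2 z.1 * μ z.1 with hπ12def
  -- marginal identity for the iterates
  have hmarg : ∀ n x, ∑ y, (I1 ∘ I2)^[n] q0 (x, y) = M^[n] p0 x := by
    intro n
    induction n with
    | zero => intro x; rfl
    | succ n ih =>
      intro x
      rw [Function.iterate_succ_apply', Function.iterate_succ_apply']
      simp only [Function.comp_apply, hI1, hI2, ih, hMdef, hKdef]
      simp only [Finset.mul_sum]
      rw [Finset.sum_comm]
      refine Finset.sum_congr rfl fun x' _ => ?_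
      rw [Finset.sum_mul]
      exact Finset.sum_congr rfl fun y _ => (mul_assoc _ _ _).symm
  -- explicit form of even iterates (shifted by one)
  have hform : ∀ n (z : X × Y), (I1 ∘ I2)^[n + 1] q0 z
      = f12 z.1 z.2 * ∑ x', f21 z.2 x' * M^[n] p0 x' := by
    intro n z
    rw [Function.iterate_succ_apply']
    simp only [Function.comp_apply, hI1, hI2, hmarg]
  refine ⟨π21, π12, ?_, ?_, ?_, ?_, ?_, ?_, ?_, ?_, ?_, ?_⟩
  · -- convergence of even iterates
    intro z
    rw [← Filter.tendsto_add_atTop_iff_nat 1]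
    have h1 : Filter.Tendsto
        (fun n : ℕ => f12 z.1 z.2 * ∑ x', f21 z.2 x' * M^[n] p0 x')
        Filter.atTop (nhds (f12 z.1 z.2 * ∑ x', f21 z.2 x' * μ x')) :=
      ((tendsto_finset_sum _ fun x' _ => (hμtend x').const_mul _).const_mul _)
    have h2 : (fun n : ℕ => (I1 ∘ I2)^[n + 1] q0 z)
        = fun n : ℕ => f12 z.1 z.2 * ∑ x', f21 z.2 x' * M^[n] p0 x' := by
      funext n; exact hform n z
    rw [h2]
    exact h1
  · exact fun z => mul_nonneg (hf12pos z.1 z.2).le (hgpos z.2).le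
  · rw [Fintype.sum_prod_type]
    rw [Finset.sum_comm]
    calc ∑ y, ∑ x, π21 (x, y) = ∑ y, g y := by
          refine Finset.sum_congr rfl fun y _ => ?_
          simp only [hπ21def]
          rw [← Finset.sum_mul, hf12sum, one_mul]
      _ = ∑ x', μ x' := by
          rw [hgdef]
          simp only
          rw [Finset.sum_comm]
          refine Finset.sum_congr rfl fun x' _ => ?_
          rw [← Finset.sum_mul, hf21sum, one_mul]
      _ = 1 := hμsum
  · intro x y
    have hden : ∑ x', π21 (x', y) = g y := by
      simp only [hπ21def]
      rw [← Finset.sum_mul, hf12sum, one_mul]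
    rw [hden]
    simp only [hπ21def]
    rw [mul_div_assoc, div_self (hgpos y).ne', mul_one]
  · -- fixed point of I1 ∘ I2
    have hIπ21 : I2 π21 = π12 := by
      funext z
      rw [hI2]
      simp only [hπ21def, hπ12def]
      congr 1
      calc ∑ y', f12 z.1 y' * g y' = ∑ x', K z.1 x' * μ x' := by
            simp only [hgdef, hKdef, Finset.mul_sum]
            rw [Finset.sum_comm]
            refine Finset.sum_congr rfl fun x' _ => ?_
            rw [Finset.sum_mul]
            exact Finset.sum_congr rfl fun y _ => (mul_assoc _ _ _).symm
        _ = μ z.1 := (hμfix z.1).symm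
    have hIπ12 : I1 π12 = π21 := by
      funext z
      rw [hI1]
    rw [hIπ21, hIπ12]
  · -- convergence of odd iterates
    intro z
    have h2 : (fun n : ℕ => I2 ((I1 ∘ I2)^[n] q0) z)
        = fun n : ℕ => f21 z.2 z.1 * M^[n] p0 z.1 := by
      funext n
      rw [hI2]
      rw [hmarg]
    rw [h2]
    exact (hμtend z.1).const_mul _
  · exact fun z => mul_nonneg (hf21pos z.2 z.1).le (hμpos z.1).le
  · rw [Fintype.sum_prod_type]
    calc ∑ x, ∑ y, π12 (x, y) = ∑ x, μ x := by
          refine Finset.sum_congr rfl fun x _ => ?_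
          simp only [hπ12def]
          rw [← Finset.sum_mul, hf21sum, one_mul]
      _ = 1 := hμsum
  · intro x y
    have hden : ∑ y', π12 (x, y') = μ x := by
      simp only [hπ12def]
      rw [← Finset.sum_mul, hf21sum, one_mul]
    rw [hden]
    simp only [hπ12def]
    rw [mul_div_assoc, div_self (hμpos x).ne', mul_one]
  · -- fixed point of I2 ∘ I1
    have hIπ12 : I1 π12 = π21 := by
      funext z
      rw [hI1]
    have hIπ21 : I2 π21 = π12 := by
      funext z
      rw [hI2]
      simp only [hπ21def, hπ12def]
      congr 1
      calc ∑ y', f12 z.1 y' * g y' = ∑ x', K z.1 x' * μ x' := by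
            simp only [hgdef, hKdef, Finset.mul_sum]
            rw [Finset.sum_comm]
            refine Finset.sum_congr rfl fun x' _ => ?_
            rw [Finset.sum_mul]
            exact Finset.sum_congr rfl fun y _ => (mul_assoc _ _ _).symm
        _ = μ z.1 := (hμfix z.1).symm
    rw [hIπ12, hIπ21]
end

section
/- Let D be a finite type and let a_i, b_i ⊆ D for i ∈ Fin L with L ≥ 1, indices taken cyclically (index L + 1 ≡ 1), such that every a_i is nonempty and a_i ∩ b_i = ∅. If b_{i+1} ⊆ a_i ∪ b_i for every i (a permissible updating cycle), then it cannot be that b_{i+1} = a_i ∪ b_i for all i; that is, there exists some i with (a_i ∪ b_i) \ b_{i+1} ≠ ∅. -/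
/-! If no step were strict, then `a i ∪ b i ⊆ b (i + 1)`, so `#b (i + 1) ≥ #a i + #b i > #b i`
because `a i` is nonempty and disjoint from `b i`. The cardinality of `b` would then strictly
increase all the way round the cycle, which is impossible: summing over the cycle gives
`∑ #b < ∑ #b`. -/

open Finset

theorem Equiv.Perm.not_forall_lt_apply {ι M : Type*} [Fintype ι] [Nonempty ι]
    [AddCommMonoid M] [PartialOrder M] [IsOrderedCancelAddMonoid M]
    (f : ι → M) (σ : Equiv.Perm ι) : ¬ ∀ i, f i < f (σ i) := fun h =>
  (sum_lt_sum_of_nonempty univ_nonempty fun i _ => h i).ne (Equiv.sum_comp σ f).symm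

theorem exists_strict_step_of_permissible_cycle_general
    {D : Type*} [DecidableEq D]
    {L : ℕ} [NeZero L] (a b : Fin L → Finset D)
    (ha : ∀ i, (a i).Nonempty)
    (hdisj : ∀ i, Disjoint (a i) (b i)) :
    ∃ i : Fin L, ((a i ∪ b i) \ b (i + 1)).Nonempty := by
  by_contra! h
  refine (Equiv.addRight 1).not_forall_lt_apply (fun i => #(b i)) fun i => ?_
  calc #(b i) < #(a i) + #(b i) := Nat.lt_add_of_pos_left (ha i).card_pos
    _ = #(a i ∪ b i) := (card_union_of_disjoint (hdisj i)).symm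
    _ ≤ #(b (i + 1)) := card_le_card (sdiff_eq_empty_iff_subset.mp (h i))

/-- **A permissible updating cycle cannot have `b_{i+1} = a_i ∪ b_i` for all `i`.**
Let `a i, b i ⊆ D` for `i ∈ Fin L` (indices cyclic, `L ≥ 1`), with every `a i`
nonempty and `a i ∩ b i = ∅`.  If `b (i+1) ⊆ a i ∪ b i` for every `i` (a
permissible updating cycle), then there is some `i` with
`(a i ∪ b i) \ b (i+1) ≠ ∅`. -/
theorem exists_strict_step_of_permissible_cycle
    {D : Type*} [Fintype D] [DecidableEq D]
    {L : ℕ} [NeZero L] (a b : Fin L → Finset D)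
    (ha : ∀ i, (a i).Nonempty)
    (hdisj : ∀ i, Disjoint (a i) (b i))
    (hcyc : ∀ i, b (i + 1) ⊆ a i ∪ b i) :
    ∃ i : Fin L, ((a i ∪ b i) \ b (i + 1)).Nonempty :=
  exists_strict_step_of_permissible_cycle_general a b ha hdisj
end

section
/- Let D be a finite index type with family S : D → Type of nonempty finite types, and let a_i, b_i ⊆ D for i ∈ Fin L (taken cyclically) with a_i ∩ b_i = ∅, c_i = a_i ∪ b_i, and b_{i+1} ⊆ c_i for all i. For each i let f_i be a strictly positive conditional pmf of the a_i-coordinates given the b_i-coordinates, with conditional replacement operators T_i(h) = f_{i+1} · h_{b_{i+1}} mapping pmfs on ∏_{j∈c_i} S j to pmfs on ∏_{j∈c_{i+1}} S j. Fix i and let 𝕀 = T_{i-1} ∘ ⋯ ∘ T_{i+1} ∘ T_i denote the composite operator for one full cycle returning to ∏_{j∈c_i} S j. If π is a positive pmf on ∏_{j∈c_i} S j with 𝕀(π) = π, then for every positive pmf q on ∏_{j∈c_i} S j, I(π; 𝕀(q)) ≤ I(π; q). -/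
noncomputable section

variable {D : Type*}

/-- One step of the iterative conditional replacement cycle: the pmf attached to
index `i` is replaced, via the conditional replacement operator `T_i` (which uses
the conditional pmf `f (i+1)`), by a pmf attached to index `i + 1`. -/
def cycleStep (S : D → Type*) [DecidableEq D] [∀ j, Fintype (S j)] [∀ j, DecidableEq (S j)]
    {L : ℕ} [NeZero L] (a b : Fin L → Finset D)
    (f : ∀ i, Cfg S (a i) → Cfg S (b i) → ℝ)
    (hcyc : ∀ i, b (i + 1) ⊆ a i ∪ b i)
    (p : Σ i : Fin L, (Cfg S (a i ∪ b i) → ℝ)) :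
    Σ i : Fin L, (Cfg S (a i ∪ b i) → ℝ) :=
  ⟨p.1 + 1, condRepl S (hcyc p.1) (f (p.1 + 1)) p.2⟩

/-!
Because `f` cancels from the likelihood ratio, a conditional replacement step `T` satisfies
`I(T p; T q) = I(p_b; q_b)`, and by the log-sum inequality on each fibre of the restriction map,
passing to marginals does not increase the divergence. So every step of the cycle, hence the
full cycle `𝕀`, is non-expansive for `I`; since `𝕀 π = π`, this is the claim.
-/

open Finset

theorem sum_mul_log_div_sum_le {Z : Type*} {s : Finset Z} (hs : s.Nonempty) {p q : Z → ℝ}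
    (hp : ∀ x ∈ s, 0 < p x) (hq : ∀ x ∈ s, 0 < q x) :
    (∑ x ∈ s, p x) * Real.log ((∑ x ∈ s, p x) / ∑ x ∈ s, q x) ≤
      ∑ x ∈ s, p x * Real.log (p x / q x) := by
  set A := ∑ x ∈ s, p x
  set B := ∑ x ∈ s, q x
  have hA : 0 < A := sum_pos hp hs
  have hB : 0 < B := sum_pos hq hs
  have key : ∀ x ∈ s, p x * Real.log (A / B) - p x * Real.log (p x / q x) ≤ A / B * q x - p x := by
    intro x hx
    have := hp x hx
    have := hq x hx
    calc p x * Real.log (A / B) - p x * Real.log (p x / q x)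
        = p x * Real.log (A / B * (q x / p x)) := by
          rw [← mul_sub, ← Real.log_div (by positivity) (by positivity)]
          congr 2
          field_simp
      _ ≤ p x * (A / B * (q x / p x) - 1) := by
          gcongr
          exact Real.log_le_sub_one_of_pos (by positivity)
      _ = A / B * q x - p x := by field_simp
  have hsum := sum_le_sum key
  rw [sum_sub_distrib, sum_sub_distrib, ← sum_mul, ← mul_sum, div_mul_cancel₀ A hB.ne'] at hsum
  linarith

theorem Finset.restrict₂_surjective {ι : Type*} {π : ι → Type*} [∀ i, Nonempty (π i)]
    {s t : Finset ι} (hst : s ⊆ t) : Function.Surjective (restrict₂ (π := π) hst) := by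
  classical
  intro y
  refine ⟨fun i => if h : i.1 ∈ s then y ⟨i.1, h⟩ else Classical.arbitrary (π i.1), ?_⟩
  funext i
  simp [restrict₂, i.2]

section CondRepl

variable (S : D → Type*) [DecidableEq D] [∀ j, Fintype (S j)]

theorem sum_cfg_union {M : Type*} [AddCommMonoid M] {a b : Finset D} (hab : Disjoint a b)
    (F : Cfg S a → Cfg S b → M) :
    ∑ x : Cfg S (a ∪ b), F (restrict₂ subset_union_left x) (restrict₂ subset_union_right x) =
      ∑ xa, ∑ xb, F xa xb := by
  rw [← (Equiv.piFinsetUnion S hab).sum_comp, Fintype.sum_prod_type]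
  refine sum_congr rfl fun xa _ => sum_congr rfl fun xb _ => congr_arg₂ F ?_ ?_
  · funext j
    exact Equiv.piFinsetUnion_left S hab j.2 _
  · funext j
    exact Equiv.piFinsetUnion_right S hab j.2 _

variable [∀ j, DecidableEq (S j)]

theorem marg_eq_sum_filter {b c : Finset D} (hbc : b ⊆ c) (h : Cfg S c → ℝ) (xb : Cfg S b) :
    marg S hbc h xb = ∑ x with restrict₂ hbc x = xb, h x := by
  rw [sum_filter]
  rfl

theorem sum_marg {b c : Finset D} (hbc : b ⊆ c) (h : Cfg S c → ℝ) :
    ∑ xb, marg S hbc h xb = ∑ x, h x := by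
  simp_rw [marg_eq_sum_filter]
  exact sum_fiberwise _ _ _

theorem filter_restrict₂_eq_nonempty [∀ j, Nonempty (S j)] {b c : Finset D} (hbc : b ⊆ c)
    (xb : Cfg S b) : (univ.filter fun x : Cfg S c => restrict₂ hbc x = xb).Nonempty := by
  obtain ⟨x, hx⟩ := restrict₂_surjective hbc xb
  exact ⟨x, mem_filter.2 ⟨mem_univ x, hx⟩⟩

theorem marg_pos [∀ j, Nonempty (S j)] {b c : Finset D} (hbc : b ⊆ c) {h : Cfg S c → ℝ}
    (hh : ∀ x, 0 < h x) (xb : Cfg S b) : 0 < marg S hbc h xb := by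
  rw [marg_eq_sum_filter]
  exact sum_pos (fun x _ => hh x) (filter_restrict₂_eq_nonempty S hbc xb)

theorem condRepl_apply {a b c : Finset D} (hbc : b ⊆ c) (f : Cfg S a → Cfg S b → ℝ)
    (h : Cfg S c → ℝ) (x : Cfg S (a ∪ b)) :
    condRepl S hbc f h x = f (restrict₂ subset_union_left x) (restrict₂ subset_union_right x) *
      marg S hbc h (restrict₂ subset_union_right x) :=
  rfl

theorem condRepl_pos [∀ j, Nonempty (S j)] {a b c : Finset D} (hbc : b ⊆ c)
    {f : Cfg S a → Cfg S b → ℝ} (hf : ∀ xa xb, 0 < f xa xb)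
    {h : Cfg S c → ℝ} (hh : ∀ x, 0 < h x) (x : Cfg S (a ∪ b)) :
    0 < condRepl S hbc f h x :=
  mul_pos (hf _ _) (marg_pos S hbc hh _)

theorem KLd_condRepl_condRepl {a b c : Finset D} (hbc : b ⊆ c) (hab : Disjoint a b)
    {f : Cfg S a → Cfg S b → ℝ} (hf : ∀ xa xb, 0 < f xa xb) (hfsum : ∀ xb, ∑ xa, f xa xb = 1)
    (p q : Cfg S c → ℝ) :
    KLd (condRepl S hbc f p) (condRepl S hbc f q) = KLd (marg S hbc p) (marg S hbc q) := by
  set g : Cfg S b → ℝ := fun xb => marg S hbc p xb * Real.log (marg S hbc p xb / marg S hbc q xb)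
  calc KLd (condRepl S hbc f p) (condRepl S hbc f q)
      = ∑ x : Cfg S (a ∪ b), f (restrict₂ subset_union_left x) (restrict₂ subset_union_right x) *
          g (restrict₂ subset_union_right x) := by
        refine sum_congr rfl fun x _ => ?_
        simp only [condRepl_apply, g, mul_div_mul_left _ _ (hf _ _).ne', mul_assoc]
    _ = ∑ xb, (∑ xa, f xa xb) * g xb := by
        rw [sum_cfg_union S hab (fun xa xb => f xa xb * g xb), sum_comm]
        simp only [sum_mul]
    _ = KLd (marg S hbc p) (marg S hbc q) := by simp only [hfsum, one_mul, g, KLd]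

theorem KLd_marg_le [∀ j, Nonempty (S j)] {b c : Finset D} (hbc : b ⊆ c)
    {p q : Cfg S c → ℝ} (hp : ∀ x, 0 < p x) (hq : ∀ x, 0 < q x) :
    KLd (marg S hbc p) (marg S hbc q) ≤ KLd p q := by
  rw [KLd, KLd, ← sum_marg S hbc]
  refine sum_le_sum fun xb _ => ?_
  simp only [marg_eq_sum_filter]
  exact sum_mul_log_div_sum_le (filter_restrict₂_eq_nonempty S hbc xb)
    (fun x _ => hp x) (fun x _ => hq x)

theorem KLd_condRepl_le [∀ j, Nonempty (S j)] {a b c : Finset D} (hbc : b ⊆ c)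
    (hab : Disjoint a b) {f : Cfg S a → Cfg S b → ℝ} (hf : ∀ xa xb, 0 < f xa xb)
    (hfsum : ∀ xb, ∑ xa, f xa xb = 1) {p q : Cfg S c → ℝ} (hp : ∀ x, 0 < p x)
    (hq : ∀ x, 0 < q x) :
    KLd (condRepl S hbc f p) (condRepl S hbc f q) ≤ KLd p q :=
  (KLd_condRepl_condRepl S hbc hab hf hfsum p q).trans_le (KLd_marg_le S hbc hp hq)

theorem KLd_le_of_iterate_cycleStep [∀ j, Nonempty (S j)] {L : ℕ} [NeZero L]
    (a b : Fin L → Finset D) (hdisj : ∀ i, Disjoint (a i) (b i))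
    (hcyc : ∀ i, b (i + 1) ⊆ a i ∪ b i) (f : ∀ i, Cfg S (a i) → Cfg S (b i) → ℝ)
    (hfpos : ∀ i xa xb, 0 < f i xa xb) (hfsum : ∀ i xb, ∑ xa, f i xa xb = 1) (k : ℕ)
    {i j : Fin L} {p q : Cfg S (a i ∪ b i) → ℝ} {p' q' : Cfg S (a j ∪ b j) → ℝ}
    (hp : ∀ x, 0 < p x) (hq : ∀ x, 0 < q x)
    (hp' : (cycleStep S a b f hcyc)^[k] ⟨i, p⟩ = ⟨j, p'⟩)
    (hq' : (cycleStep S a b f hcyc)^[k] ⟨i, q⟩ = ⟨j, q'⟩) :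
    KLd p' q' ≤ KLd p q := by
  induction k generalizing i p q with
  | zero =>
    cases hp'
    cases hq'
    exact le_rfl
  | succ k ih =>
    rw [Function.iterate_succ_apply] at hp' hq'
    exact (ih (condRepl_pos S _ (hfpos _) hp) (condRepl_pos S _ (hfpos _) hq) hp' hq').trans
      (KLd_condRepl_le S (hcyc i) (hdisj _) (hfpos _) (hfsum _) hp hq)

end CondRepl

theorem full_cycle_kl_contraction_general
    {D : Type*} [DecidableEq D]
    (S : D → Type*) [∀ j, Fintype (S j)] [∀ j, DecidableEq (S j)] [∀ j, Nonempty (S j)]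
    {L : ℕ} [NeZero L] (a b : Fin L → Finset D)
    (hdisj : ∀ i, Disjoint (a i) (b i))
    (hcyc : ∀ i, b (i + 1) ⊆ a i ∪ b i)
    (f : ∀ i, Cfg S (a i) → Cfg S (b i) → ℝ)
    (hfpos : ∀ i xa xb, 0 < f i xa xb)
    (hfsum : ∀ i xb, ∑ xa, f i xa xb = 1)
    (i : Fin L) (π : Cfg S (a i ∪ b i) → ℝ)
    (hπpos : ∀ x, 0 < π x)
    (hfix : (cycleStep S a b f hcyc)^[L] ⟨i, π⟩ = ⟨i, π⟩)
    (q : Cfg S (a i ∪ b i) → ℝ) (hqpos : ∀ x, 0 < q x)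
    (q' : Cfg S (a i ∪ b i) → ℝ)
    (hq' : (cycleStep S a b f hcyc)^[L] ⟨i, q⟩ = ⟨i, q'⟩) :
    KLd π q' ≤ KLd π q :=
  KLd_le_of_iterate_cycleStep S a b hdisj hcyc f hfpos hfsum L hπpos hqpos hfix hq'

/-- **The full-cycle composite operator `𝕀` contracts the divergence to its fixed point.**
Under a permissible updating cycle with strictly positive conditional pmfs, if
`π` is a positive pmf on the `c i`-coordinates fixed by the composite operator
`𝕀 = T_{i-1} ∘ ⋯ ∘ T_{i+1} ∘ T_i` (one full cycle, i.e. `L` applications of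
`cycleStep` starting at index `i`), then `I(π; 𝕀(q)) ≤ I(π; q)` for every
positive pmf `q` on the `c i`-coordinates. -/
theorem full_cycle_kl_contraction
    {D : Type*} [Fintype D] [DecidableEq D]
    (S : D → Type*) [∀ j, Fintype (S j)] [∀ j, DecidableEq (S j)] [∀ j, Nonempty (S j)]
    {L : ℕ} [NeZero L] (a b : Fin L → Finset D)
    (hdisj : ∀ i, Disjoint (a i) (b i))
    (hcyc : ∀ i, b (i + 1) ⊆ a i ∪ b i)
    (f : ∀ i, Cfg S (a i) → Cfg S (b i) → ℝ)
    (hfpos : ∀ i xa xb, 0 < f i xa xb)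
    (hfsum : ∀ i xb, ∑ xa, f i xa xb = 1)
    (i : Fin L) (π : Cfg S (a i ∪ b i) → ℝ)
    (hπpos : ∀ x, 0 < π x) (hπsum : ∑ x, π x = 1)
    (hfix : (cycleStep S a b f hcyc)^[L] ⟨i, π⟩ = ⟨i, π⟩)
    (q : Cfg S (a i ∪ b i) → ℝ) (hqpos : ∀ x, 0 < q x) (hqsum : ∑ x, q x = 1)
    (q' : Cfg S (a i ∪ b i) → ℝ)
    (hq' : (cycleStep S a b f hcyc)^[L] ⟨i, q⟩ = ⟨i, q'⟩) :
    KLd π q' ≤ KLd π q :=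
  full_cycle_kl_contraction_general S a b hdisj hcyc f hfpos hfsum i π hπpos hfix q hqpos q' hq'
end
end
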